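/- Let n ≥ 4 and 2 ≤ a ≤ n−1 be integers. Let Q = ℂ[u₁,…,uₙ] and let J be the ideal generated by g_j := a·u_j^{a−1} − ∏_{k≠j} u_k for j = 1,…,n. Then for a polynomial p ∈ ℂ[T], the element p(u₁^a) lies in J if and only if T^{n−1} − a^a·T^{a−1} divides p. Equivalently, the kernel of the ℂ-algebra homomorphism ℂ[T] → Q/J sending T to the class of u₁^a is the ideal generated by T^{n−1} − a^a·T^{a−1}. -/

import Mathlib

/-!
Write `β = u₁^a` and `q = T^{n-1} - a^a T^{a-1} = T^{a-1} (T^{n-a} - a^a)`.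

In `Q/J` the relations `a u_j^a = u₁⋯uₙ =: M` give
`M^{n-1} = ∏_j ∏_{k≠j} u_k = ∏_j a u_j^{a-1} = a^n M^{a-1}`, and substituting `M = aβ` yields
`q(β) = 0` after cancelling the unit `a^{n-1}`.

Conversely, as `T^{n-a} - a^a` is separable, `q ∣ p` as soon as `p` vanishes at every root `ζ`
of `T^{n-a} - a^a` and has no terms `T^k` with `k < a - 1`. Every such `ζ` is the value of `β`
at a common zero of the `g_j`, so `p(ζ) = 0`. For the coefficients, fix `s` with
`s^{n-a} = a` and let `ℓ_k` keep the monomials of degree `k` in `u₁⋯uₙ` and the `u_j^a`, and then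
evaluate at `(s, …, s)`. Every `g_j` vanishes at `(s, …, s)`, and when `k < a - 1` the two
monomials of `u^d g_j` are both kept or both discarded, so `ℓ_k` kills `J`; on the other hand
`ℓ_k(p(β)) = p_k s^{ak}`.
-/

open MvPolynomial

/-- The element `g_j = a·u_j^{a−1} − ∏_{k≠j} u_k` of the polynomial ring
`Q = ℂ[u₁,…,uₙ]`. Up to sign, this is the partial derivative `∂Z^n_a/∂u_j` of
`Z^n_a = −u₁⋯uₙ + Σ_j u_j^a`. -/
noncomputable def gPoly (n a : ℕ) (j : Fin n) : MvPolynomial (Fin n) ℂ :=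
  (a : MvPolynomial (Fin n) ℂ) * X j ^ (a - 1) - ∏ k ∈ Finset.univ.erase j, X k

theorem Polynomial.X_pow_mul_X_pow_sub_C_dvd {K : Type*} [Field K] [IsAlgClosed K] [CharZero K]
    {r m : ℕ} {c : K} {p : Polynomial K} (hm : m ≠ 0) (hc : c ≠ 0)
    (hcoeff : ∀ k < r, p.coeff k = 0) (hroot : ∀ z, z ^ m = c → p.eval z = 0) :
    Polynomial.X ^ r * (Polynomial.X ^ m - Polynomial.C c) ∣ p := by
  open Polynomial in
  obtain ⟨h, rfl⟩ := X_pow_dvd_iff.mpr hcoeff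
  refine mul_dvd_mul_left _ ?_
  rcases eq_or_ne h 0 with rfl | hh
  · exact dvd_zero _
  have hsep : (X ^ m - C c).Separable := separable_X_pow_sub_C c (Nat.cast_ne_zero.mpr hm) hc
  refine (IsAlgClosed.splits _).dvd_of_roots_le_roots (X_pow_sub_C_ne_zero (Nat.pos_of_ne_zero hm) c)
    ((Multiset.le_iff_subset (nodup_roots hsep)).mpr fun z hz => ?_)
  have hzc : z ^ m = c := by simpa [sub_eq_zero] using (mem_roots'.mp hz).2
  have hz0 : z ≠ 0 := by rintro rfl; exact hc (by simpa [zero_pow hm] using hzc.symm)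
  have hpz := hroot z hzc
  rw [eval_mul, eval_pow, eval_X] at hpz
  exact mem_roots'.mpr ⟨hh, (mul_eq_zero.mp hpz).resolve_left (pow_ne_zero _ hz0)⟩

section Products

variable {σ : Type*} [Fintype σ] [DecidableEq σ]

theorem sum_update_add_self {M : Type*} [AddCommMonoid M] (f : σ → M) (j : σ) (x : M) :
    ∑ i, Function.update f j x i + f j = ∑ i, f i + x := by
  rw [Finset.sum_update_of_mem (Finset.mem_univ j), ← Finset.add_sum_erase _ f (Finset.mem_univ j),
    Finset.sdiff_singleton_eq_erase]
  abel

theorem prod_prod_erase_eq_prod_pow {M : Type*} [CommMonoid M] (x : σ → M) :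
    ∏ j, ∏ k ∈ Finset.univ.erase j, x k = (∏ k, x k) ^ (Fintype.card σ - 1) := by
  rw [Finset.prod_comm' (t' := Finset.univ) (s' := fun k => Finset.univ.erase k)
    (by simp [ne_comm]), ← Finset.prod_pow]
  simp [Finset.card_erase_of_mem]

theorem pow_card_sub_one_eq_of_mul_pow_eq_prod_erase {R : Type*} [CommRing R] {a : ℕ} (ha : a ≠ 0)
    (hua : IsUnit (a : R)) {x : σ → R}
    (hx : ∀ j, a * x j ^ (a - 1) = ∏ k ∈ Finset.univ.erase j, x k) (i : σ) :
    (x i ^ a) ^ (Fintype.card σ - 1) = a ^ a * (x i ^ a) ^ (a - 1) := by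
  have hM : ∀ j, a * x j ^ a = ∏ k, x k := fun j => by
    rw [← Finset.prod_erase_mul _ _ (Finset.mem_univ j), ← hx, mul_assoc, ← pow_succ,
      Nat.sub_add_cancel (Nat.pos_of_ne_zero ha)]
  have hMpow : (∏ k, x k) ^ (Fintype.card σ - 1) = a ^ Fintype.card σ * (∏ k, x k) ^ (a - 1) := by
    rw [← prod_prod_erase_eq_prod_pow, ← Finset.prod_congr rfl fun j _ => hx j,
      Finset.prod_mul_distrib, Finset.prod_const, Finset.card_univ, Finset.prod_pow]
  rw [← hM i] at hMpow
  obtain ⟨N, hN⟩ : ∃ N, Fintype.card σ = N + 1 :=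
    ⟨_, (Nat.succ_pred_eq_of_pos (Fintype.card_pos_iff.mpr ⟨i⟩)).symm⟩
  obtain ⟨b, rfl⟩ : ∃ b, a = b + 1 := ⟨a - 1, by omega⟩
  simp only [hN, Nat.add_sub_cancel] at hMpow ⊢
  apply (hua.pow N).mul_left_cancel
  linear_combination hMpow

end Products

section LevelExponent

variable {σ : Type*} [Fintype σ] [DecidableEq σ]

/-- The exponents of the monomials of degree `k` in `∏ i, X i` and the `X j ^ a`. -/
def IsLevelExponent (a k : ℕ) (d : σ →₀ ℕ) : Prop :=
  ∃ (b : ℕ) (γ : σ → ℕ), b + ∑ i, γ i = k ∧ ∀ i, d i = b + a * γ i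

theorem sum_erase_single_one_apply (j i : σ) :
    (∑ l ∈ Finset.univ.erase j, Finsupp.single l 1 : σ →₀ ℕ) i = if i = j then 0 else 1 := by
  rw [Finsupp.finsetSum_apply]
  split_ifs with h
  · subst h
    exact Finset.sum_eq_zero fun l hl => Finsupp.single_eq_of_ne' (Finset.ne_of_mem_erase hl)
  · simp [Finsupp.single_apply, Finset.sum_ite_eq', h]

theorem IsLevelExponent.add_sum_single_of_add_single {a k : ℕ} (hka : k + 1 < a) {d : σ →₀ ℕ}
    {j : σ} (hd : IsLevelExponent a k (d + Finsupp.single j (a - 1))) :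
    IsLevelExponent a k (d + ∑ i ∈ Finset.univ.erase j, Finsupp.single i 1) := by
  simp only [IsLevelExponent, Finsupp.add_apply, Finsupp.single_apply,
    sum_erase_single_one_apply] at hd ⊢
  obtain ⟨b, γ, hsum, hd⟩ := hd
  obtain ⟨g, hg⟩ : ∃ g, γ j = g + 1 :=
    Nat.exists_eq_succ_of_ne_zero fun h0 => by have := hd j; simp [h0] at this; omega
  refine ⟨b + 1, Function.update γ j g, ?_, fun i => ?_⟩
  · have := sum_update_add_self γ j g
    omega
  · have := hd i
    rcases eq_or_ne i j with rfl | hij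
    · simp only [if_true, Function.update_self, hg, mul_add, mul_one] at this ⊢
      omega
    · simp only [Ne.symm hij, hij, if_false, Function.update_of_ne hij] at this ⊢
      omega

theorem IsLevelExponent.add_single_of_add_sum_single {a k : ℕ} (ha : a ≠ 0)
    (hkσ : k + 1 < Fintype.card σ) {d : σ →₀ ℕ} {j : σ}
    (hd : IsLevelExponent a k (d + ∑ i ∈ Finset.univ.erase j, Finsupp.single i 1)) :
    IsLevelExponent a k (d + Finsupp.single j (a - 1)) := by
  simp only [IsLevelExponent, Finsupp.add_apply, Finsupp.single_apply,
    sum_erase_single_one_apply] at hd ⊢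
  obtain ⟨b, γ, hsum, hd⟩ := hd
  obtain ⟨b', rfl⟩ : ∃ b', b = b' + 1 := Nat.exists_eq_succ_of_ne_zero fun hb => by
    have hγ : ∀ i ∈ Finset.univ.erase j, 1 ≤ γ i := fun i hi => by
      have := hd i
      simp only [Finset.ne_of_mem_erase hi, if_false, hb] at this
      rcases Nat.eq_zero_or_pos (γ i) with h | h
      · simp [h] at this
      · exact h
    have hcard : Fintype.card σ - 1 ≤ ∑ i ∈ Finset.univ.erase j, γ i := by
      simpa [Finset.card_erase_of_mem] using Finset.card_nsmul_le_sum _ _ 1 hγ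
    have : ∑ i ∈ Finset.univ.erase j, γ i ≤ ∑ i, γ i :=
      Finset.sum_le_sum_of_subset (Finset.erase_subset j _)
    omega
  refine ⟨b', Function.update γ j (γ j + 1), ?_, fun i => ?_⟩
  · have := sum_update_add_self γ j (γ j + 1)
    omega
  · have := hd i
    rcases eq_or_ne i j with rfl | hij
    · simp only [if_true, Function.update_self, mul_add, mul_one] at this ⊢
      omega
    · simp only [Ne.symm hij, hij, if_false, Function.update_of_ne hij] at this ⊢
      omega

theorem isLevelExponent_add_single_iff {a k : ℕ} (hka : k + 1 < a) (hkσ : k + 1 < Fintype.card σ)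
    (d : σ →₀ ℕ) (j : σ) :
    IsLevelExponent a k (d + Finsupp.single j (a - 1)) ↔
      IsLevelExponent a k (d + ∑ i ∈ Finset.univ.erase j, Finsupp.single i 1) :=
  ⟨.add_sum_single_of_add_single hka, .add_single_of_add_sum_single (by omega) hkσ⟩

theorem isLevelExponent_single_iff [Nontrivial σ] {a k : ℕ} (ha : a ≠ 0) (i : σ) (e : ℕ) :
    IsLevelExponent a k (Finsupp.single i (a * e)) ↔ e = k := by
  constructor
  · rintro ⟨b, γ, hsum, hd⟩
    have hoff : ∀ l ≠ i, b = 0 ∧ γ l = 0 := fun l hl => by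
      have := hd l
      rw [Finsupp.single_eq_of_ne hl] at this
      exact ⟨by omega, by simpa [ha] using (Nat.add_eq_zero_iff.mp this.symm).2⟩
    obtain ⟨l, hl⟩ := exists_ne i
    have hγi : γ i = e := by
      have := hd i
      rw [Finsupp.single_eq_same, (hoff l hl).1, zero_add] at this
      exact (Nat.eq_of_mul_eq_mul_left (Nat.pos_of_ne_zero ha) this).symm
    rw [← hsum, (hoff l hl).1, zero_add, Finset.sum_eq_single i (fun l _ hl => (hoff l hl).2)
      (by simp), hγi]
  · rintro rfl
    refine ⟨0, Pi.single i e, by simp, fun l => ?_⟩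
    rcases eq_or_ne l i with rfl | hl
    · simp
    · simp [hl]

end LevelExponent

section LevelFunctional

open scoped Classical

variable {σ R : Type*} [Fintype σ] [CommRing R]

noncomputable def levelFunctional (a k : ℕ) (s : R) : MvPolynomial σ R →ₗ[R] R :=
  (basisMonomials σ R).constr R fun d => if IsLevelExponent a k d then s ^ d.degree else 0

theorem levelFunctional_monomial (a k : ℕ) (s : R) (d : σ →₀ ℕ) (c : R) :
    levelFunctional a k s (monomial d c) =
      c * if IsLevelExponent a k d then s ^ d.degree else 0 := by
  rw [show monomial d c = c • basisMonomials σ R d by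
      rw [coe_basisMonomials, smul_monomial, smul_eq_mul, mul_one],
    map_smul, levelFunctional, Module.Basis.constr_basis, smul_eq_mul]

theorem levelFunctional_aeval_X_pow [Nontrivial σ] {a : ℕ} (ha : a ≠ 0) (k : ℕ) (s : R) (i : σ)
    (p : Polynomial R) :
    levelFunctional a k s (Polynomial.aeval (X i ^ a) p) = p.coeff k * s ^ (a * k) := by
  induction p using Polynomial.induction_on' with
  | add p q hp hq => rw [map_add, map_add, hp, hq, Polynomial.coeff_add, add_mul]
  | monomial e c =>
    rw [Polynomial.aeval_monomial, ← pow_mul, X_pow_eq_monomial, algebraMap_eq, C_mul_monomial,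
      mul_one, levelFunctional_monomial, isLevelExponent_single_iff ha, Polynomial.coeff_monomial,
      Finsupp.degree_single]
    split_ifs with h <;> simp [h]

theorem gPoly_eq_monomial_sub_monomial (n a : ℕ) (j : Fin n) :
    gPoly n a j = monomial (Finsupp.single j (a - 1)) (a : ℂ) -
      monomial (∑ i ∈ Finset.univ.erase j, Finsupp.single i 1) 1 := by
  rw [gPoly, monomial_sum_one, X_pow_eq_monomial, ← map_natCast (C : ℂ →+* MvPolynomial (Fin n) ℂ),
    C_mul_monomial, mul_one]
  rfl

theorem levelFunctional_mul_gPoly {n a k : ℕ} (hka : k + 1 < a) (hkn : k + 1 < n) (han : a ≤ n)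
    {s : ℂ} (hs : s ^ (n - a) = a) (f : MvPolynomial (Fin n) ℂ) (j : Fin n) :
    levelFunctional a k s (f * gPoly n a j) = 0 := by
  induction f using MvPolynomial.induction_on' with
  | add f g hf hg => rw [add_mul, map_add, hf, hg, add_zero]
  | monomial d c =>
    rw [gPoly_eq_monomial_sub_monomial, mul_sub, monomial_mul, monomial_mul, map_sub,
      levelFunctional_monomial, levelFunctional_monomial,
      isLevelExponent_add_single_iff hka (by simpa using hkn), map_add, map_add, map_sum]
    simp only [Finsupp.degree_single, Finset.sum_const, Finset.card_erase_of_mem (Finset.mem_univ j),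
      Finset.card_univ, Fintype.card_fin, smul_eq_mul, mul_one]
    have hdeg : s ^ (d.degree + (n - 1)) = s ^ (d.degree + (a - 1)) * a := by
      rw [← hs, ← pow_add]
      congr 1
      omega
    split_ifs
    · rw [hdeg]; ring
    · ring

end LevelFunctional

noncomputable abbrev jacobianIdeal (n a : ℕ) : Ideal (MvPolynomial (Fin n) ℂ) :=
  Ideal.span (Set.range (gPoly n a))

theorem coeff_eq_zero_of_aeval_mem_jacobianIdeal {n a k : ℕ} (hka : k + 1 < a) (han : a < n)
    (i : Fin n) {p : Polynomial ℂ} (hp : Polynomial.aeval (X i ^ a) p ∈ jacobianIdeal n a) :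
    p.coeff k = 0 := by
  have : Nontrivial (Fin n) := Fin.nontrivial_iff_two_le.mpr (by omega)
  obtain ⟨s, hs⟩ := IsAlgClosed.exists_pow_nat_eq (a : ℂ) (Nat.sub_pos_of_lt han)
  have hs0 : s ≠ 0 := by
    rintro rfl
    rw [zero_pow (Nat.sub_pos_of_lt han).ne'] at hs
    exact (Nat.cast_ne_zero.mpr (show a ≠ 0 by omega)) hs.symm
  obtain ⟨c, hc⟩ := Ideal.mem_span_range_iff_exists_fun.mp hp
  have hℓ := levelFunctional_aeval_X_pow (show a ≠ 0 by omega) k s i p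
  rw [← hc, map_sum, Finset.sum_eq_zero fun j _ =>
    levelFunctional_mul_gPoly hka (by omega) han.le hs (c j) j] at hℓ
  exact (mul_eq_zero.mp hℓ.symm).resolve_right (pow_ne_zero _ hs0)

theorem aeval_gPoly_eq_zero {n a : ℕ} (ha : a ≠ 0) {v : Fin n → ℂ} {j : Fin n} (hvj : v j ≠ 0)
    (h : a * v j ^ a = ∏ k, v k) : aeval v (gPoly n a j) = 0 := by
  have : a * v j ^ (a - 1) * v j = (∏ k ∈ Finset.univ.erase j, v k) * v j := by
    rw [Finset.prod_erase_mul _ _ (Finset.mem_univ j), ← h, mul_assoc, ← pow_succ,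
      Nat.sub_add_cancel (Nat.pos_of_ne_zero ha)]
  simp [gPoly, mul_right_cancel₀ hvj this]

theorem exists_aeval_gPoly_eq_zero {n a : ℕ} (ha : a ≠ 0) (han : a < n) {ζ : ℂ}
    (hζ : ζ ^ (n - a) = a ^ a) (i : Fin n) :
    ∃ v : Fin n → ℂ, (∀ j, aeval v (gPoly n a j) = 0) ∧ v i ^ a = ζ := by
  obtain ⟨w, rfl⟩ := IsAlgClosed.exists_pow_nat_eq ζ (Nat.pos_of_ne_zero ha)
  have ha' : (a : ℂ) ≠ 0 := Nat.cast_ne_zero.mpr ha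
  have hw : w ≠ 0 := by
    rintro rfl
    rw [zero_pow ha, zero_pow (Nat.sub_pos_of_lt han).ne'] at hζ
    exact pow_ne_zero a ha' hζ.symm
  -- When `gcd(a, n - a) > 1` there may be no zero of the form `(w, …, w)` with `w ^ a = ζ`;
  -- twisting one coordinate by the `a`-th root of unity `ε` fixes the product `∏ k, v k`
  -- without changing the `a`-th powers.
  set ε : ℂ := a / w ^ (n - a)
  have hε : ε ^ a = 1 := by
    rw [div_pow, ← pow_mul, mul_comm, pow_mul, hζ, div_self (pow_ne_zero _ ha')]
  set v : Fin n → ℂ := Function.update (fun _ => w) i (ε * w)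
  have hv0 : ∀ j, v j ≠ 0 := fun j => by
    rcases eq_or_ne j i with rfl | hj
    · simp [v, ε, hw, ha']
    · simp [v, hj, hw]
  have hva : ∀ j, v j ^ a = w ^ a := fun j => by
    rcases eq_or_ne j i with rfl | hj
    · simp [v, mul_pow, hε]
    · simp [v, hj]
  have hprod : ∏ k, v k = a * w ^ a := by
    rw [Finset.prod_update_of_mem (Finset.mem_univ i), Finset.prod_const,
      Finset.card_sdiff_of_subset (by simp), Finset.card_univ, Fintype.card_fin,
      Finset.card_singleton, mul_assoc, ← pow_succ', show n - 1 + 1 = n - a + a by omega, pow_add,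
      ← mul_assoc, div_mul_cancel₀ _ (pow_ne_zero _ hw)]
  exact ⟨v, fun j => aeval_gPoly_eq_zero ha (hv0 j) (by rw [hva, hprod]), hva i⟩

theorem eval_eq_zero_of_aeval_mem_jacobianIdeal {n a : ℕ} (ha : a ≠ 0) (han : a < n) (i : Fin n)
    {p : Polynomial ℂ} (hp : Polynomial.aeval (X i ^ a) p ∈ jacobianIdeal n a) {ζ : ℂ}
    (hζ : ζ ^ (n - a) = a ^ a) : p.eval ζ = 0 := by
  obtain ⟨v, hv, hvi⟩ := exists_aeval_gPoly_eq_zero ha han hζ i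
  have hJ : jacobianIdeal n a ≤ RingHom.ker (aeval v) :=
    Ideal.span_le.mpr (Set.range_subset_iff.mpr hv)
  have := hJ hp
  rwa [RingHom.mem_ker, ← Polynomial.aeval_algHom_apply, map_pow, aeval_X, hvi,
    Polynomial.coe_aeval_eq_eval] at this

theorem aeval_X_pow_sub_C_mul_X_pow_mem_jacobianIdeal {n a : ℕ} (ha : a ≠ 0) (i : Fin n) :
    Polynomial.aeval (X i ^ a)
        (Polynomial.X ^ (n - 1) - Polynomial.C ((a : ℂ) ^ a) * Polynomial.X ^ (a - 1)) ∈
      jacobianIdeal n a := by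
  set mk := Ideal.Quotient.mkₐ ℂ (jacobianIdeal n a)
  have hx : ∀ j, (a : _) * mk (X j) ^ (a - 1) = ∏ k ∈ Finset.univ.erase j, mk (X k) := fun j => by
    have hj : mk (gPoly n a j) = 0 :=
      Ideal.Quotient.eq_zero_iff_mem.mpr (Ideal.subset_span ⟨j, rfl⟩)
    rwa [gPoly, map_sub, sub_eq_zero, map_mul, map_pow, map_natCast, map_prod] at hj
  have hua : IsUnit (a : MvPolynomial (Fin n) ℂ ⧸ jacobianIdeal n a) := by
    simpa using (IsUnit.mk0 (a : ℂ) (Nat.cast_ne_zero.mpr ha)).map (algebraMap ℂ _)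
  have key := pow_card_sub_one_eq_of_mul_pow_eq_prod_erase ha hua hx i
  rw [Fintype.card_fin] at key
  rw [← Ideal.Quotient.eq_zero_iff_mem, ← Ideal.Quotient.mkₐ_eq_mk ℂ,
    ← Polynomial.aeval_algHom_apply]
  simpa [sub_eq_zero, mk] using key

/-- For `n ≥ 4` and `2 ≤ a ≤ n−1`, in `Q = ℂ[u₁,…,uₙ]` with `J` the ideal
generated by `g₁,…,gₙ`: for a polynomial `p ∈ ℂ[T]`, the element `p(u₁^a)` lies in `J`
iff `T^{n−1} − a^a·T^{a−1}` divides `p`.  (Equivalently, the kernel of `ℂ[T] → Q/J`,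
`T ↦ [u₁^a]`, is the ideal `(T^{n−1} − a^a·T^{a−1})`.) -/
theorem kernel_of_polynomial_map_to_jacobian_ring
    (n a : ℕ) (hn : 4 ≤ n) (ha : 2 ≤ a) (han : a ≤ n - 1) (p : Polynomial ℂ) :
    Polynomial.aeval ((X (⟨0, by omega⟩ : Fin n) : MvPolynomial (Fin n) ℂ) ^ a) p
        ∈ Ideal.span (Set.range (gPoly n a))
      ↔ (Polynomial.X ^ (n - 1)
          - Polynomial.C ((a : ℂ) ^ a) * Polynomial.X ^ (a - 1)) ∣ p := by
  have ha0 : a ≠ 0 := by omega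
  have han' : a < n := by omega
  constructor
  · intro hp
    have hfactor : Polynomial.X ^ (n - 1) - Polynomial.C ((a : ℂ) ^ a) * Polynomial.X ^ (a - 1) =
        Polynomial.X ^ (a - 1) * (Polynomial.X ^ (n - a) - Polynomial.C ((a : ℂ) ^ a)) := by
      rw [mul_sub, ← pow_add, show a - 1 + (n - a) = n - 1 by omega]
      ring
    rw [hfactor]
    exact Polynomial.X_pow_mul_X_pow_sub_C_dvd (by omega) (pow_ne_zero _ (Nat.cast_ne_zero.mpr ha0))
      (fun k hk => coeff_eq_zero_of_aeval_mem_jacobianIdeal (by omega) han' _ hp)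
      (fun z hz => eval_eq_zero_of_aeval_mem_jacobianIdeal ha0 han' _ hp hz)
  · rintro ⟨t, rfl⟩
    rw [map_mul]
    exact Ideal.mul_mem_right _ _ (aeval_X_pow_sub_C_mul_X_pow_mem_jacobianIdeal ha0 _)
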